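/- Let D be the equispaced trigonometric differentiation matrix of odd size N = 2n+1. For each integer m with 1 ≤ m ≤ n, the 2-dimensional real subspace of ℝ^N spanned by the vectors c^{(m)} = (cos(m t_j))_j and s^{(m)} = (sin(m t_j))_j is invariant under D, with D c^{(m)} = -m s^{(m)} and D s^{(m)} = m c^{(m)}. -/

import Mathlib

open Real

/-- Equidistant nodes `t_j = -π + 2πj/N`. -/
noncomputable def node (N : ℕ) (j : Fin N) : ℝ := -π + 2 * π * (j.1 + 1) / N

/-- The equispaced trigonometric differentiation matrix (real). -/
noncomputable def Dmat (N : ℕ) : Matrix (Fin N) (Fin N) ℝ := fun j k =>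
  if j = k then 0
  else (-1 : ℝ) ^ (j.1 + k.1) / (2 * Real.sin (π * ((j.1 : ℝ) - (k.1 : ℝ)) / N))

/-!
The vector `e k = exp (i m t_k)` is an eigenvector of `D` with eigenvalue `i m`; its real and
imaginary parts are `c` and `s`. Since `D j k` depends only on `j - k` modulo `N` (`N` odd) and
`t_k = t_j - 2π (j - k) / N`, this reduces to `Σ_{d < N} κ(d) exp (-2π i m d / N) = i m` for
the kernel `κ(d) = (-1)^d / (2 sin (π d / N))`. For `m = 0` the sum vanishes because `κ` is odd and
`N`-periodic. Going from `m` to `m + 1` multiplies the phase difference by `-2i sin (π d / N)`,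
which cancels the denominator of `κ` and leaves `-i` times a sum of powers of a nontrivial `N`-th
root of unity with the `d = 0` term removed, i.e. `i`.
-/

open Complex Finset Function
open scoped Matrix

-- `Dmat N j k = diffKernel N (j - k)`; at multiples of `N` the division by `sin = 0` gives the
-- zero diagonal.
noncomputable def diffKernel (N : ℕ) (d : ℤ) : ℝ := (-1) ^ d / (2 * Real.sin (π * d / N))

theorem Dmat_apply_eq_diffKernel (N : ℕ) (j k : Fin N) :
    Dmat N j k = diffKernel N ((j : ℤ) - k) := by
  unfold Dmat diffKernel
  split_ifs with hjk
  · simp [hjk]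
  · have hsign : (-1 : ℝ) ^ ((j : ℤ) - k) = (-1) ^ (j.1 + k.1) := by
      rw [neg_one_zpow_eq_ite, ← zpow_natCast, neg_one_zpow_eq_ite]
      simp [Int.even_sub, Int.even_add]
    push_cast
    rw [hsign]

theorem diffKernel_zero (N : ℕ) : diffKernel N 0 = 0 := by
  simp [diffKernel]

theorem diffKernel_neg (N : ℕ) (d : ℤ) : diffKernel N (-d) = -diffKernel N d := by
  have hsign : (-1 : ℝ) ^ (-d) = (-1) ^ d := by
    simp only [neg_one_zpow_eq_ite, even_neg]
  simp only [diffKernel, hsign, Int.cast_neg, mul_neg, neg_div, Real.sin_neg, div_neg]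

theorem diffKernel_periodic {N : ℕ} (hN : Odd N) : Periodic (diffKernel N) N := by
  intro d
  have hN0 : (N : ℝ) ≠ 0 := by exact_mod_cast hN.pos.ne'
  have hsin : Real.sin (π * ((d + N : ℤ) : ℝ) / N) = -Real.sin (π * d / N) := by
    rw [show π * ((d + N : ℤ) : ℝ) / N = π * d / N + π by push_cast; field_simp,
      Real.sin_add_pi]
  rw [diffKernel, diffKernel, hsin, zpow_add₀ (by norm_num), zpow_natCast, hN.neg_one_pow]
  ring

theorem Function.Periodic.sum_fin_sub {M : Type*} [AddCommMonoid M] {N : ℕ} {f : ℤ → M}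
    (hf : Periodic f N) (j : Fin N) : ∑ k : Fin N, f (j - k) = ∑ d ∈ range N, f d := by
  have : NeZero N := ⟨j.pos.ne'⟩
  rw [← Fin.sum_univ_eq_sum_range (fun d : ℕ => f d)]
  refine Fintype.sum_equiv (Equiv.subLeft j) _ _ fun k => ?_
  simp only [Equiv.subLeft_apply]
  rcases le_or_gt k j with hkj | hjk
  · rw [Fin.coe_sub_iff_le.mpr hkj, Nat.cast_sub hkj]
  · rw [Fin.coe_sub_iff_lt.mpr hjk, Nat.cast_sub (by omega), Nat.cast_add,
      show (N : ℤ) + j - k = j - k + N by ring, hf]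

theorem sum_range_diffKernel_eq_zero {N : ℕ} (hN : Odd N) :
    ∑ d ∈ range N, diffKernel N d = 0 := by
  have h := (diffKernel_periodic hN).sum_fin_sub ⟨0, hN.pos⟩
  simp only [Nat.cast_zero, zero_sub, diffKernel_neg, sum_neg_distrib,
    Fin.sum_univ_eq_sum_range (fun d => diffKernel N d)] at h
  linarith

theorem periodic_cexp_two_pi_mul_div {N : ℕ} (hN : N ≠ 0) (m : ℕ) :
    Periodic (fun d : ℤ => cexp (-(2 * π * m * d / N) * I)) N := by
  intro d
  rw [exp_eq_exp_iff_exists_int]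
  exact ⟨-m, by push_cast; field_simp; ring⟩

theorem IsPrimitiveRoot.geom_sum_pow_eq_zero {R : Type*} [CommRing R] [IsDomain R] {ζ : R}
    {k a : ℕ} (hζ : IsPrimitiveRoot ζ k) (ha : ¬ k ∣ a) : ∑ i ∈ range k, (ζ ^ a) ^ i = 0 := by
  have hne : ζ ^ a ≠ 1 := by rwa [Ne, hζ.pow_eq_one_iff_dvd]
  refine eq_zero_of_ne_zero_of_mul_left_eq_zero (sub_ne_zero_of_ne hne.symm) ?_
  rw [mul_neg_geom_sum, ← pow_mul, mul_comm, pow_mul, hζ.pow_eq_one, one_pow, sub_self]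

theorem cexp_neg_mul_I_sub_cexp_mul_I (x : ℂ) :
    cexp (-x * I) - cexp (x * I) = -2 * I * Complex.sin x := by
  linear_combination I * two_sin x + (cexp (-x * I) - cexp (x * I)) * I_sq

theorem diffKernel_mul_two_sin {N d : ℕ} (hd : 0 < d) (hdN : d < N) :
    diffKernel N d * (2 * Real.sin (π * d / N)) = (-1) ^ d := by
  have hN : (0 : ℝ) < N := by exact_mod_cast hd.trans hdN
  have hsin : 0 < Real.sin (π * d / N) := by
    apply Real.sin_pos_of_pos_of_lt_pi (div_pos (mul_pos pi_pos (by exact_mod_cast hd)) hN)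
    rw [div_lt_iff₀ hN, mul_lt_mul_iff_right₀ pi_pos]
    exact_mod_cast hdN
  rw [diffKernel, Int.cast_natCast, div_mul_cancel₀ _ (by positivity), zpow_natCast]

theorem neg_cexp_odd_mul_pi_div_eq_pow {n m : ℕ} (hmn : m ≤ n) :
    -cexp (-((2 * m + 1) * π / (2 * n + 1 : ℕ)) * I) =
      cexp (2 * π * I / (2 * n + 1 : ℕ)) ^ (n - m) := by
  rw [← Complex.exp_nat_mul, neg_eq_neg_one_mul, ← exp_pi_mul_I, ← Complex.exp_add]
  congr 1
  have hN : (2 * n + 1 : ℂ) ≠ 0 := by norm_cast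
  push_cast [Nat.cast_sub hmn]
  field_simp
  ring

theorem sum_diffKernel_mul_cexp_succ_sub (n m : ℕ) (hmn : m < n) :
    ∑ d ∈ range (2 * n + 1), (diffKernel (2 * n + 1) d : ℂ) *
      (cexp (-(2 * π * (m + 1 : ℕ) * d / (2 * n + 1 : ℕ)) * I) -
        cexp (-(2 * π * m * d / (2 * n + 1 : ℕ)) * I)) = I := by
  set N := 2 * n + 1
  set w := cexp (-((2 * m + 1) * π / N) * I)
  have hgeom : ∑ d ∈ range N, (-w) ^ d = 0 := by
    rw [neg_cexp_odd_mul_pi_div_eq_pow hmn.le]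
    exact (isPrimitiveRoot_exp N (by omega)).geom_sum_pow_eq_zero
      (Nat.not_dvd_of_pos_of_lt (by omega) (by omega))
  have hterm : ∀ d ∈ range (2 * n), (diffKernel N (d + 1 : ℕ) : ℂ) *
      (cexp (-(2 * π * (m + 1 : ℕ) * (d + 1 : ℕ) / N) * I) -
        cexp (-(2 * π * m * (d + 1 : ℕ) / N) * I)) = -I * (-w) ^ (d + 1) := by
    intro d hd
    set x : ℝ := π * (d + 1 : ℕ) / N
    have hsplit : cexp (-(2 * π * (m + 1 : ℕ) * (d + 1 : ℕ) / N) * I) -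
        cexp (-(2 * π * m * (d + 1 : ℕ) / N) * I) =
          w ^ (d + 1) * (cexp (-x * I) - cexp (x * I)) := by
      rw [← Complex.exp_nat_mul, mul_sub, ← Complex.exp_add, ← Complex.exp_add]
      congr 2 <;> simp only [x] <;> push_cast <;> ring
    have hκ : (diffKernel N (d + 1 : ℕ) : ℂ) * (2 * Complex.sin x) = (-1) ^ (d + 1) := by
      exact_mod_cast diffKernel_mul_two_sin (N := N) (by omega : 0 < d + 1) (by simp at hd; omega)
    rw [hsplit, cexp_neg_mul_I_sub_cexp_mul_I, neg_pow, ← hκ]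
    ring
  rw [sum_range_succ', sum_congr rfl hterm, ← mul_sum, Nat.cast_zero, diffKernel_zero, ofReal_zero,
    zero_mul, add_zero]
  rw [sum_range_succ'] at hgeom
  linear_combination (-I) * hgeom

theorem sum_diffKernel_mul_cexp (n m : ℕ) (hmn : m ≤ n) :
    ∑ d ∈ range (2 * n + 1), (diffKernel (2 * n + 1) d : ℂ) *
      cexp (-(2 * π * m * d / (2 * n + 1 : ℕ)) * I) = I * m := by
  induction m with
  | zero =>
    simp only [Nat.cast_zero, mul_zero, zero_mul, zero_div, neg_zero, Complex.exp_zero, mul_one]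
    exact_mod_cast sum_range_diffKernel_eq_zero ⟨n, rfl⟩
  | succ m ih =>
    have hstep := sum_diffKernel_mul_cexp_succ_sub n m hmn
    simp only [mul_sub, sum_sub_distrib, ih (by omega)] at hstep
    push_cast at hstep ⊢
    linear_combination hstep

theorem Dmat_mulVec_cexp (n m : ℕ) (hmn : m ≤ n) :
    (Dmat (2 * n + 1)).map ofReal *ᵥ (fun k => cexp ((m * node (2 * n + 1) k : ℝ) * I)) =
      (m * I) • fun k => cexp ((m * node (2 * n + 1) k : ℝ) * I) := by
  set N := 2 * n + 1
  have hN : N ≠ 0 := by omega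
  have hF : Periodic (fun d : ℤ => (diffKernel N d : ℂ) * cexp (-(2 * π * m * d / N) * I)) N :=
    ((diffKernel_periodic ⟨n, rfl⟩).comp ofReal).mul (periodic_cexp_two_pi_mul_div hN m)
  funext j
  have hnode : ∀ k : Fin N, cexp ((m * node N k : ℝ) * I) =
      cexp ((m * node N j : ℝ) * I) * cexp (-(2 * π * m * ((j : ℤ) - k : ℤ) / N) * I) := by
    intro k
    rw [← Complex.exp_add]
    congr 1
    have hN' : (N : ℂ) ≠ 0 := by exact_mod_cast hN
    simp only [node]
    push_cast
    field_simp
    ring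
  calc ∑ k, (Dmat N j k : ℂ) * cexp ((m * node N k : ℝ) * I)
      = cexp ((m * node N j : ℝ) * I) *
          ∑ k : Fin N, (diffKernel N ((j : ℤ) - k) : ℂ) *
            cexp (-(2 * π * m * ((j : ℤ) - k : ℤ) / N) * I) := by
        rw [mul_sum]
        refine sum_congr rfl fun k _ => ?_
        rw [Dmat_apply_eq_diffKernel, hnode]
        ring
    _ = (m * I) * cexp ((m * node N j : ℝ) * I) := by
        rw [hF.sum_fin_sub j]
        simp only [Int.cast_natCast]
        rw [sum_diffKernel_mul_cexp n m hmn]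
        ring

theorem Matrix.mulVec_re_im_of_map_ofReal_mulVec_eq_I_smul {ι : Type*} [Fintype ι]
    {A : Matrix ι ι ℝ} {c s : ι → ℝ} {μ : ℝ}
    (h : A.map ofReal *ᵥ (fun k => ⟨c k, s k⟩) = (μ * I) • fun k => ⟨c k, s k⟩) :
    A *ᵥ c = -μ • s ∧ A *ᵥ s = μ • c := by
  have hj : ∀ j, ∑ k, A j k * c k = -(μ * s j) ∧ ∑ k, A j k * s k = μ * c j := fun j => by
    simpa [Matrix.mulVec, dotProduct, Complex.ext_iff, re_sum, im_sum] using congrFun h j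
  exact ⟨funext fun j => by simp [Matrix.mulVec, dotProduct, (hj j).1],
    funext fun j => by simp [Matrix.mulVec, dotProduct, (hj j).2]⟩

theorem cos_sin_invariant_plane_general (n : ℕ) (m : ℕ) (hmn : m ≤ n)
    (c s : Fin (2 * n + 1) → ℝ)
    (hc : ∀ j, c j = Real.cos (m * node (2 * n + 1) j))
    (hs : ∀ j, s j = Real.sin (m * node (2 * n + 1) j)) :
    (Dmat (2 * n + 1)).mulVec c = -(m : ℝ) • s ∧
    (Dmat (2 * n + 1)).mulVec s = (m : ℝ) • c ∧
    ∀ v ∈ Submodule.span ℝ ({c, s} : Set (Fin (2 * n + 1) → ℝ)),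
      (Dmat (2 * n + 1)).mulVec v ∈ Submodule.span ℝ ({c, s} : Set (Fin (2 * n + 1) → ℝ)) := by
  have hcs : (fun k => (⟨c k, s k⟩ : ℂ)) = fun k => cexp ((m * node (2 * n + 1) k : ℝ) * I) :=
    funext fun k => Complex.ext ((hc k).trans (exp_ofReal_mul_I_re _).symm)
      ((hs k).trans (exp_ofReal_mul_I_im _).symm)
  obtain ⟨hDc, hDs⟩ :=
    Matrix.mulVec_re_im_of_map_ofReal_mulVec_eq_I_smul (hcs ▸ Dmat_mulVec_cexp n m hmn)
  refine ⟨hDc, hDs, fun v hv => ?_⟩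
  have hspan : Submodule.span ℝ {c, s} ≤
      (Submodule.span ℝ {c, s}).comap (Dmat (2 * n + 1)).mulVecLin := by
    rw [Submodule.span_le]
    rintro _ (rfl | rfl) <;>
      simp only [SetLike.mem_coe, Submodule.mem_comap, Matrix.mulVecLin_apply, hDc, hDs] <;>
      exact Submodule.smul_mem _ _ (Submodule.subset_span (by simp))
  exact hspan hv

theorem cos_sin_invariant_plane (n : ℕ) (hn : 1 ≤ n) (m : ℕ) (hm1 : 1 ≤ m) (hmn : m ≤ n)
    (c s : Fin (2 * n + 1) → ℝ)
    (hc : ∀ j, c j = Real.cos (m * node (2 * n + 1) j))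
    (hs : ∀ j, s j = Real.sin (m * node (2 * n + 1) j)) :
    (Dmat (2 * n + 1)).mulVec c = -(m : ℝ) • s ∧
    (Dmat (2 * n + 1)).mulVec s = (m : ℝ) • c ∧
    ∀ v ∈ Submodule.span ℝ ({c, s} : Set (Fin (2 * n + 1) → ℝ)),
      (Dmat (2 * n + 1)).mulVec v ∈ Submodule.span ℝ ({c, s} : Set (Fin (2 * n + 1) → ℝ)) :=
  cos_sin_invariant_plane_general n m hmn c s hc hs
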